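/- Suppose φ ∈ L¹(ℝ) ∩ L²(ℝ) satisfies the two-scale relation φ(x) = 2 Σ_{k∈ℤ} h_k φ(2x - k) with finitely many nonzero coefficients h_k (k = 0,…,2p−1) summing to 1. Then Φ = Tφ satisfies the two-scale relation Φ(x) = 2 Σ_{k∈ℤ} H_k Φ(2x - k) with H_k = (h_{k-1} + h_k)/2 for k = 0,…,2p, where h_{-1} = h_{2p} = 0. -/

import Mathlib

/-!
Integrating the two-scale relation over `[x - 1, x]`, the substitution `u = 2t - k` turns each
term into half an integral of `φ` over `[2x - k - 2, 2x - k]`, which splits into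
`Tφ(2x - k - 1) + Tφ(2x - k)`. Shifting the index in the first half collects the coefficients
`(h_{k-1} + h_k) / 2`.
-/

open MeasureTheory

/-- The elevation operator `T` with kernel `𝟙_{[x-1,x]}(y)`. -/
noncomputable def Telev (f : ℝ → ℝ) (x : ℝ) : ℝ := ∫ t in (x - 1)..x, f t

theorem integral_comp_two_mul_sub_eq_Telev {φ : ℝ → ℝ} (hφ : Integrable φ) (x c : ℝ) :
    ∫ t in (x - 1)..x, φ (2 * t - c) = (Telev φ (2 * x - c - 1) + Telev φ (2 * x - c)) / 2 := by
  rw [intervalIntegral.integral_comp_mul_sub φ two_ne_zero, Telev, Telev,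
    ← intervalIntegral.integral_add_adjacent_intervals hφ.intervalIntegrable
      hφ.intervalIntegrable (b := 2 * x - c - 1)]
  ring_nf

theorem tsum_mul_average_succ {h : ℤ → ℝ} (hh : (Function.support h).Finite) (g : ℤ → ℝ) :
    ∑' k, h k * ((g (k + 1) + g k) / 2) = ∑' k, (h (k - 1) + h k) / 2 * g k := by
  have hsum : ∀ f : ℤ → ℝ, Summable fun k => h k * f k := fun f =>
    summable_of_hasFiniteSupport (hh.subset (Function.support_mul_subset_left _ _))
  have hshift : ∑' k, h k * g (k + 1) = ∑' k, h (k - 1) * g k := by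
    simpa using (Equiv.addRight (1 : ℤ)).tsum_eq (fun k => h (k - 1) * g k)
  have hsum' : Summable fun k => h (k - 1) * g k := by
    refine (Equiv.addRight (1 : ℤ)).summable_iff.1 ?_
    simpa [Function.comp_def] using hsum fun k => g (k + 1)
  calc ∑' k, h k * ((g (k + 1) + g k) / 2)
      = (∑' k, h k * g (k + 1) + ∑' k, h k * g k) / 2 := by
        rw [← (hsum _).tsum_add (hsum _), ← tsum_div_const]
        exact tsum_congr fun k => by ring
    _ = (∑' k, h (k - 1) * g k + ∑' k, h k * g k) / 2 := by rw [hshift]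
    _ = ∑' k, (h (k - 1) + h k) / 2 * g k := by
        rw [← hsum'.tsum_add (hsum _), ← tsum_div_const]
        exact tsum_congr fun k => by ring

theorem Telev_eq_two_mul_tsum_integral {φ : ℝ → ℝ} {h : ℤ → ℝ} (hφ : Integrable φ)
    (hh : (Function.support h).Finite)
    (hTSR : ∀ x : ℝ, φ x = 2 * ∑' k : ℤ, h k * φ (2 * x - k)) (x : ℝ) :
    Telev φ x = 2 * ∑' k : ℤ, h k * ∫ t in (x - 1)..x, φ (2 * t - k) := by
  have hs : ∀ k ∉ hh.toFinset, h k = 0 := by simp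
  have hint : ∀ k : ℤ, Integrable fun t : ℝ => φ (2 * t - k) := fun k => by
    simpa using (hφ.comp_sub_right (k : ℝ)).comp_mul_left' (R := 2) two_ne_zero
  have hfinite : ∀ y : ℝ, φ y = 2 * ∑ k ∈ hh.toFinset, h k * φ (2 * y - k) := fun y => by
    rw [hTSR, tsum_eq_sum fun k hk => by simp [hs k hk]]
  rw [Telev, intervalIntegral.integral_congr fun y _ => hfinite y,
    tsum_eq_sum (s := hh.toFinset) fun k hk => by simp [hs k hk],
    intervalIntegral.integral_const_mul, intervalIntegral.integral_finsetSum
    fun k _ => ((hint k).const_mul _).intervalIntegrable]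
  simp only [intervalIntegral.integral_const_mul]

theorem stmt_5_general (φ : ℝ → ℝ) (h : ℤ → ℝ) (p : ℕ)
    (hL1 : Integrable φ)
    (hfin : ∀ k : ℤ, k < 0 ∨ (2 * p : ℤ) - 1 < k → h k = 0)
    (hTSR : ∀ x : ℝ, φ x = 2 * ∑' k : ℤ, h k * φ (2 * x - k)) :
    ∀ x : ℝ, Telev φ x =
      2 * ∑' k : ℤ, ((h (k - 1) + h k) / 2) * Telev φ (2 * x - k) := by
  intro x
  have hh : (Function.support h).Finite := (Set.finite_Icc 0 (2 * p - 1 : ℤ)).subset fun k hk => by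
    by_contra hk'
    exact hk (hfin k (by simp only [Set.mem_Icc, not_and_or, not_le] at hk'; omega))
  rw [Telev_eq_two_mul_tsum_integral hL1 hh hTSR, ← tsum_mul_average_succ hh]
  congr 1
  refine tsum_congr fun k => ?_
  rw [integral_comp_two_mul_sub_eq_Telev hL1, Int.cast_add, Int.cast_one, sub_add_eq_sub_sub]

theorem stmt_5 (φ : ℝ → ℝ) (h : ℤ → ℝ) (p : ℕ) (hp : 1 ≤ p)
    (hL1 : Integrable φ) (hL2 : MemLp φ 2 volume)
    (hfin : ∀ k : ℤ, k < 0 ∨ (2 * p : ℤ) - 1 < k → h k = 0)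
    (hsum : ∑ k ∈ Finset.range (2 * p), h k = 1)
    (hTSR : ∀ x : ℝ, φ x = 2 * ∑' k : ℤ, h k * φ (2 * x - k)) :
    ∀ x : ℝ, Telev φ x =
      2 * ∑' k : ℤ, ((h (k - 1) + h k) / 2) * Telev φ (2 * x - k) :=
  stmt_5_general φ h p hL1 hfin hTSR
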